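/- Let 𝓡 be an R-variety, let M be an 𝓡-monoid, and let x ∈ M. Then M \ {x} is an 𝓡-monoid if and only if x belongs to the minimal 𝓡-system of generators of M. -/
import Mathlib


/-- A numerical semigroup: a subset of ℕ containing 0, closed under addition,
with finite complement. -/
def IsNumericalSemigroup (S : Set ℕ) : Prop :=
  0 ∈ S ∧ (∀ a ∈ S, ∀ b ∈ S, a + b ∈ S) ∧ Sᶜ.Finite

/-- The Frobenius number of `S` restricted to `T`: `max (T \ S)`. -/
noncomputable def FrobR (T S : Set ℕ) : ℕ := sSup (T \ S)

/-- The Frobenius number of `S`: `max (ℕ \ S)`. -/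
noncomputable def Frob (S : Set ℕ) : ℕ := sSup Sᶜ

/-- `R` is an R-variety with maximum element `Δ`. -/
structure IsRVariety (R : Set (Set ℕ)) (Δ : Set ℕ) : Prop where
  sgrp : ∀ S ∈ R, IsNumericalSemigroup S
  max_mem : Δ ∈ R
  subset_max : ∀ S ∈ R, S ⊆ Δ
  inter_mem : ∀ S ∈ R, ∀ T ∈ R, S ∩ T ∈ R
  step : ∀ S ∈ R, S ≠ Δ → S ∪ {FrobR Δ S} ∈ R

/-- `P` is a (Frobenius) pseudo-variety with maximum element `Δ`. -/
structure IsPseudoVariety (P : Set (Set ℕ)) (Δ : Set ℕ) : Prop where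
  sgrp : ∀ S ∈ P, IsNumericalSemigroup S
  max_mem : Δ ∈ P
  subset_max : ∀ S ∈ P, S ⊆ Δ
  inter_mem : ∀ S ∈ P, ∀ T ∈ P, S ∩ T ∈ P
  step : ∀ S ∈ P, S ≠ Δ → S ∪ {Frob S} ∈ P

/-- `V` is a (Frobenius) variety. -/
structure IsVariety (V : Set (Set ℕ)) : Prop where
  nonempty : V.Nonempty
  sgrp : ∀ S ∈ V, IsNumericalSemigroup S
  inter_mem : ∀ S ∈ V, ∀ T ∈ V, S ∩ T ∈ V
  step : ∀ S ∈ V, S ≠ Set.univ → S ∪ {Frob S} ∈ V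

/-- `M` is an `F`-monoid: an intersection of a nonempty subfamily of `F`. -/
def IsFMonoid (F : Set (Set ℕ)) (M : Set ℕ) : Prop :=
  ∃ G : Set (Set ℕ), G ⊆ F ∧ G.Nonempty ∧ M = ⋂₀ G

/-- The `F`-monoid generated by `A`: the intersection of all `F`-monoids containing `A`. -/
def FGen (F : Set (Set ℕ)) (A : Set ℕ) : Set ℕ :=
  ⋂₀ {M | IsFMonoid F M ∧ A ⊆ M}

/-- `A` is a minimal `F`-system of generators of `M`. -/
def IsMinGenSystem (F : Set (Set ℕ)) (A M : Set ℕ) : Prop :=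
  FGen F A = M ∧ ∀ B ⊂ A, FGen F B ≠ M

/-- A submonoid of `(ℕ, +)`. -/
def IsNatSubmonoid (M : Set ℕ) : Prop :=
  0 ∈ M ∧ ∀ a ∈ M, ∀ b ∈ M, a + b ∈ M

/-- The chain of `S` restricted to `Δ`. -/
def RestrictedChain (S Δ : Set ℕ) : Set (Set ℕ) :=
  {X | ∃ n : ℕ, X = S ∪ {x ∈ Δ | n ≤ x}}

open Set

private lemma subset_FGen (F : Set (Set ℕ)) (A : Set ℕ) : A ⊆ FGen F A :=
  fun a ha => Set.mem_sInter.2 fun _ hM => hM.2 ha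

private lemma FGen_subset {F : Set (Set ℕ)} {A N : Set ℕ} (hN : IsFMonoid F N)
    (h : A ⊆ N) : FGen F A ⊆ N :=
  Set.sInter_subset_of_mem ⟨hN, h⟩

private lemma max_isFMonoid {R : Set (Set ℕ)} {Δ : Set ℕ} (hR : IsRVariety R Δ) :
    IsFMonoid R Δ :=
  ⟨{Δ}, by simpa using hR.max_mem, ⟨Δ, rfl⟩, by simp⟩

private lemma fmonoid_subset_max {R : Set (Set ℕ)} {Δ M : Set ℕ} (hR : IsRVariety R Δ)
    (hM : IsFMonoid R M) : M ⊆ Δ := by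
  obtain ⟨G, hGR, ⟨S, hSG⟩, rfl⟩ := hM
  exact fun z hz => hR.subset_max S (hGR hSG) (Set.mem_sInter.1 hz S hSG)

private lemma FGen_eq {R : Set (Set ℕ)} {Δ : Set ℕ} (hR : IsRVariety R Δ)
    {A : Set ℕ} (hA : A ⊆ Δ) : FGen R A = ⋂₀ {S | S ∈ R ∧ A ⊆ S} := by
  apply subset_antisymm
  · apply Set.sInter_subset_of_mem
    refine ⟨⟨{S | S ∈ R ∧ A ⊆ S}, fun S hS => hS.1, ⟨Δ, hR.max_mem, hA⟩, rfl⟩, ?_⟩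
    exact fun a ha => Set.mem_sInter.2 fun S hS => hS.2 ha
  · intro z hz
    apply Set.mem_sInter.2
    rintro N ⟨⟨G, hGR, hGne, rfl⟩, hAN⟩
    apply Set.mem_sInter.2
    intro S hS
    exact Set.mem_sInter.1 hz S ⟨hGR hS, fun a ha => Set.mem_sInter.1 (hAN ha) S hS⟩

private lemma FGen_isFMonoid {R : Set (Set ℕ)} {Δ : Set ℕ} (hR : IsRVariety R Δ)
    {A : Set ℕ} (hA : A ⊆ Δ) : IsFMonoid R (FGen R A) := by
  rw [FGen_eq hR hA]
  exact ⟨{S | S ∈ R ∧ A ⊆ S}, fun S hS => hS.1, ⟨Δ, hR.max_mem, hA⟩, rfl⟩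

private lemma chain_mem {R : Set (Set ℕ)} {Δ : Set ℕ} (hR : IsRVariety R Δ)
    {S : Set ℕ} (hS : S ∈ R) (k : ℕ) : S ∪ {x ∈ Δ | k ≤ x} ∈ R := by
  obtain ⟨k₀, hk₀⟩ : ∃ k₀, ∀ x ∈ Δ \ S, x < k₀ := by
    have hfin : (Δ \ S).Finite := ((hR.sgrp S hS).2.2).subset fun x hx => hx.2
    obtain ⟨b, hb⟩ := hfin.bddAbove
    exact ⟨b + 1, fun x hx => Nat.lt_succ_of_le (hb hx)⟩
  have main : ∀ j k, k₀ ≤ k + j → S ∪ {x ∈ Δ | k ≤ x} ∈ R := by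
    intro j
    induction j with
    | zero =>
      intro k hk
      have heq : S ∪ {x ∈ Δ | k ≤ x} = S := by
        apply Set.union_eq_self_of_subset_right
        rintro x ⟨hxΔ, hkx⟩
        by_contra hxS
        exact absurd (hk₀ x ⟨hxΔ, hxS⟩) (by omega)
      rw [heq]; exact hS
    | succ j ih =>
      intro k hk
      have hT : S ∪ {x ∈ Δ | k + 1 ≤ x} ∈ R := ih (k + 1) (by omega)
      by_cases hkd : k ∈ Δ ∧ k ∉ S
      · set T := S ∪ {x ∈ Δ | k + 1 ≤ x} with hTdef
        have hkT : k ∉ T := by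
          rintro (h | ⟨_, h⟩)
          exacts [hkd.2 h, by omega]
        have hTne : T ≠ Δ := fun h => hkT (h ▸ hkd.1)
        have hfr : FrobR Δ T = k := by
          have hmem : k ∈ Δ \ T := ⟨hkd.1, hkT⟩
          have hub : ∀ x ∈ Δ \ T, x ≤ k := by
            rintro x ⟨hxΔ, hxT⟩
            by_contra h
            exact hxT (Or.inr ⟨hxΔ, by omega⟩)
          exact le_antisymm (csSup_le ⟨k, hmem⟩ hub) (le_csSup ⟨k, hub⟩ hmem)
        have hstep := hR.step T hT hTne
        rw [hfr] at hstep
        have heq : T ∪ {k} = S ∪ {x ∈ Δ | k ≤ x} := by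
          ext x
          constructor
          · rintro ((h | ⟨h1, h2⟩) | h)
            · exact Or.inl h
            · exact Or.inr ⟨h1, by omega⟩
            · have hxk : x = k := h
              subst hxk
              exact Or.inr ⟨hkd.1, le_refl x⟩
          · rintro (h | ⟨h1, h2⟩)
            · exact Or.inl (Or.inl h)
            · rcases eq_or_lt_of_le h2 with h3 | h3
              · exact Or.inr (by simp [← h3])
              · exact Or.inl (Or.inr ⟨h1, h3⟩)
        rwa [heq] at hstep
      · have heq : S ∪ {x ∈ Δ | k ≤ x} = S ∪ {x ∈ Δ | k + 1 ≤ x} := by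
          ext x
          constructor
          · rintro (h | ⟨h1, h2⟩)
            · exact Or.inl h
            · rcases eq_or_lt_of_le h2 with h3 | h3
              · subst h3
                rcases not_and_or.1 hkd with h | h
                · exact absurd h1 h
                · exact Or.inl (not_not.1 h)
              · exact Or.inr ⟨h1, h3⟩
          · rintro (h | ⟨h1, h2⟩)
            · exact Or.inl h
            · exact Or.inr ⟨h1, by omega⟩
        rw [heq]; exact hT
  exact main (k₀ - k) k (by omega)

private lemma monoid_union_tail {R : Set (Set ℕ)} {Δ N : Set ℕ} (hR : IsRVariety R Δ)
    (hN : IsFMonoid R N) (k : ℕ) : IsFMonoid R (N ∪ {x ∈ Δ | k ≤ x}) := by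
  obtain ⟨G, hGR, ⟨S₀, hS₀⟩, rfl⟩ := hN
  refine ⟨(fun S => S ∪ {x ∈ Δ | k ≤ x}) '' G, ?_, ⟨_, ⟨S₀, hS₀, rfl⟩⟩, ?_⟩
  · rintro X ⟨S, hSG, rfl⟩
    exact chain_mem hR (hGR hSG) k
  · ext z
    simp only [Set.mem_union, Set.mem_sInter, Set.mem_image, forall_exists_index, and_imp]
    constructor
    · rintro (h | h)
      · rintro X S hSG rfl
        exact Or.inl (Set.mem_sInter.1 h S hSG)
      · rintro X S hSG rfl
        exact Or.inr h
    · intro h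
      by_cases hz : z ∈ {x ∈ Δ | k ≤ x}
      · exact Or.inr hz
      · refine Or.inl (Set.mem_sInter.2 fun S hSG => ?_)
        rcases h (S ∪ {x ∈ Δ | k ≤ x}) S hSG rfl with h' | h'
        · exact h'
        · exact absurd h' hz

private lemma key_local {R : Set (Set ℕ)} {Δ : Set ℕ} (hR : IsRVariety R Δ)
    {B : Set ℕ} (hB : B ⊆ Δ) {n : ℕ} (h : n ∈ FGen R B) :
    n ∈ FGen R (B ∩ Set.Iic n) := by
  by_contra hcon
  rw [FGen, Set.mem_sInter] at hcon
  push_neg at hcon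
  obtain ⟨N, ⟨hNmon, hBN⟩, hnN⟩ := hcon
  have hN' : IsFMonoid R (N ∪ {x ∈ Δ | n + 1 ≤ x}) := monoid_union_tail hR hNmon (n + 1)
  have hBN' : B ⊆ N ∪ {x ∈ Δ | n + 1 ≤ x} := by
    intro b hb
    by_cases hbn : b ≤ n
    · exact Or.inl (hBN ⟨hb, hbn⟩)
    · exact Or.inr ⟨hB hb, by omega⟩
  have hnN' : n ∉ N ∪ {x ∈ Δ | n + 1 ≤ x} := by
    rintro (h' | ⟨_, h'⟩)
    exacts [hnN h', by omega]
  exact hnN' (FGen_subset hN' hBN' h)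

/-- For an `𝓡`-monoid `M` and `x ∈ M`, `M \ {x}` is an
`𝓡`-monoid iff `x` belongs to the minimal `𝓡`-system of generators of `M`. -/
theorem diff_singleton_isFMonoid_iff (R : Set (Set ℕ)) (Δ : Set ℕ)
    (hR : IsRVariety R Δ) (M : Set ℕ) (hM : IsFMonoid R M)
    (x : ℕ) (hx : x ∈ M) (A : Set ℕ) (hA : A ⊆ Δ)
    (hmin : IsMinGenSystem R A M) :
    IsFMonoid R (M \ {x}) ↔ x ∈ A := by
  have hMΔ : M ⊆ Δ := fmonoid_subset_max hR hM
  set D : Set ℕ := {y | y ∈ M ∧ IsFMonoid R (M \ {y})} with hDdef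
  have hDM : D ⊆ M := fun y hy => hy.1
  have hDΔ : D ⊆ Δ := hDM.trans hMΔ
  -- D generates M
  have hind : ∀ y, y ∈ M → y ∈ FGen R D := by
    intro y
    induction y using Nat.strong_induction_on with
    | _ y ih =>
      intro hy
      by_cases hc : IsFMonoid R (M \ {y})
      · exact subset_FGen R D ⟨hy, hc⟩
      · have h1 : y ∈ FGen R (M \ {y}) := by
          by_contra h2
          have heq : FGen R (M \ {y}) = M \ {y} := by
            apply subset_antisymm
            · intro z hz
              refine ⟨FGen_subset hM Set.diff_subset hz, fun hzy => ?_⟩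
              have : z = y := hzy
              exact h2 (this ▸ hz)
            · exact subset_FGen R (M \ {y})
          exact hc (heq ▸ FGen_isFMonoid hR (Set.diff_subset.trans hMΔ))
        have h3 : y ∈ FGen R ((M \ {y}) ∩ Set.Iic y) :=
          key_local hR (Set.diff_subset.trans hMΔ) h1
        have h5 : (M \ {y}) ∩ Set.Iic y ⊆ FGen R D := by
          rintro z ⟨⟨hzM, hzne⟩, hzle⟩
          have : z ≠ y := fun h => hzne h
          exact ih z (lt_of_le_of_ne hzle this) hzM
        exact FGen_subset (FGen_isFMonoid hR hDΔ) h5 h3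
  have hgen : FGen R D = M :=
    subset_antisymm (FGen_subset hM hDM) hind
  -- D ⊆ A
  have hDA : D ⊆ A := by
    intro z hz
    by_contra hzA
    have hAM : A ⊆ M \ {z} := by
      intro a ha
      refine ⟨hmin.1 ▸ subset_FGen R A ha, fun h => ?_⟩
      have : a = z := h
      exact hzA (this ▸ ha)
    have hsub : M ⊆ M \ {z} := by
      have := FGen_subset hz.2 hAM
      rwa [hmin.1] at this
    exact (hsub hz.1).2 rfl
  -- D = A
  have hDAeq : D = A := by
    by_contra hne
    exact hmin.2 D (hDA.ssubset_of_ne hne) hgen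
  constructor
  · intro hmx
    have hxD : x ∈ D := ⟨hx, hmx⟩
    rwa [hDAeq] at hxD
  · intro hxA
    have hxD : x ∈ D := hDAeq ▸ hxA
    exact hxD.2
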